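/- arXiv:2507.09634 — 4 statements merged into one kernel-verified Lean document; each statement's English description precedes it below -/
import Mathlib

section
/- Let (γ̂_j, Γ̂_j), j = 1,…,p, be mutually independent random variables with E[γ̂_j] = γ_j, E[Γ̂_j] = Γ_j = μ_α + β γ_j, and γ̂_j independent of Γ̂_j for each j. With weights w_j > 0 define θ̂₁ = (Σ w_j)(Σ w_j γ̂_j Γ̂_j) − (Σ w_j γ̂_j)(Σ w_j Γ̂_j) and θ₂ = (Σ w_j)(Σ w_j γ_j²) − (Σ w_j γ_j)². Then E[θ̂₁] = β θ₂. -/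
open Finset MeasureTheory ProbabilityTheory

theorem stmt3 {Ω : Type*} [MeasurableSpace Ω] (μ : Measure Ω) [IsProbabilityMeasure μ]
    (p : ℕ) (w γ : Fin p → ℝ) (β μα : ℝ) (hw : ∀ j, 0 < w j)
    (ghat Ghat : Fin p → Ω → ℝ)
    (hmeasg : ∀ j, Measurable (ghat j)) (hmeasG : ∀ j, Measurable (Ghat j))
    (hindep : iIndepFun
      (fun j => fun ω => (ghat j ω, Ghat j ω)) μ)
    (hindepPair : ∀ j, IndepFun (ghat j) (Ghat j) μ)
    (hL2g : ∀ j, MemLp (ghat j) 2 μ) (hL2G : ∀ j, MemLp (Ghat j) 2 μ)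
    (hmeang : ∀ j, ∫ ω, ghat j ω ∂μ = γ j)
    (hmeanG : ∀ j, ∫ ω, Ghat j ω ∂μ = μα + β * γ j) :
    ∫ ω, ((∑ j, w j) * (∑ j, w j * (ghat j ω * Ghat j ω))
          - (∑ j, w j * ghat j ω) * (∑ j, w j * Ghat j ω)) ∂μ
      = β * ((∑ j, w j) * (∑ j, w j * γ j ^ 2) - (∑ j, w j * γ j) ^ 2) := by
  have hIg : ∀ j, Integrable (ghat j) μ := fun j => (hL2g j).integrable (by norm_num)
  have hIG : ∀ j, Integrable (Ghat j) μ := fun j => (hL2G j).integrable (by norm_num)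
  have hInt : ∀ j k, Integrable (fun ω => ghat j ω * Ghat k ω) μ := by
    intro j k
    have h := (((hL2G k).smul (hL2g j) (p := 2) (q := 2) (r := 1)).integrable le_rfl)
    simpa [Pi.smul_apply, smul_eq_mul, Pi.mul_def] using h
  have hmul : ∀ j k, ∫ ω, ghat j ω * Ghat k ω ∂μ = γ j * (μα + β * γ k) := by
    intro j k
    by_cases h : j = k
    · subst h
      exact ((hindepPair j).integral_mul_eq_mul_integral (hIg j).1 (hIG j).1).trans
        (by rw [hmeang, hmeanG])
    · have hjk : IndepFun (ghat j) (Ghat k) μ :=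
        (hindep.indepFun h).comp measurable_fst measurable_snd
      exact (hjk.integral_mul_eq_mul_integral (hIg j).1 (hIG k).1).trans
        (by rw [hmeang, hmeanG])
  have h1 : ∫ ω, (∑ j, w j) * (∑ j, w j * (ghat j ω * Ghat j ω)) ∂μ
      = (∑ j, w j) * ∑ j, w j * (γ j * (μα + β * γ j)) := by
    rw [integral_const_mul, integral_finset_sum _ (fun j _ => (hInt j j).const_mul (w j))]
    congr 1
    refine Finset.sum_congr rfl fun j _ => ?_
    rw [integral_const_mul, hmul]
  have hexp : ∀ ω : Ω, (∑ j, w j * ghat j ω) * (∑ j, w j * Ghat j ω)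
      = ∑ j, ∑ k, (w j * w k) * (ghat j ω * Ghat k ω) := by
    intro ω; rw [Finset.sum_mul_sum]
    exact Finset.sum_congr rfl fun j _ => Finset.sum_congr rfl fun k _ => by ring
  have h2 : ∫ ω, (∑ j, w j * ghat j ω) * (∑ j, w j * Ghat j ω) ∂μ
      = (∑ j, w j * γ j) * (∑ j, w j * (μα + β * γ j)) := by
    simp_rw [hexp]
    rw [integral_finset_sum _ (fun j _ => integrable_finset_sum _
      (fun k _ => (hInt j k).const_mul _)), Finset.sum_mul_sum]
    refine Finset.sum_congr rfl fun j _ => ?_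
    rw [integral_finset_sum _ (fun k _ => (hInt j k).const_mul _)]
    refine Finset.sum_congr rfl fun k _ => ?_
    rw [integral_const_mul, hmul]; ring
  rw [integral_sub ((integrable_finset_sum _ (fun j _ => (hInt j j).const_mul (w j))).const_mul _)
    (by
      simp_rw [hexp]
      exact integrable_finset_sum _ (fun j _ => integrable_finset_sum _
        (fun k _ => (hInt j k).const_mul _))), h1, h2]
  have sA : ∑ j, w j * (γ j * (μα + β * γ j))
      = μα * (∑ j, w j * γ j) + β * (∑ j, w j * γ j ^ 2) := by
    rw [Finset.mul_sum, Finset.mul_sum, ← Finset.sum_add_distrib]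
    exact Finset.sum_congr rfl fun j _ => by ring
  have sB : ∑ j, w j * (μα + β * γ j)
      = μα * (∑ j, w j) + β * (∑ j, w j * γ j) := by
    rw [Finset.mul_sum, Finset.mul_sum, ← Finset.sum_add_distrib]
    exact Finset.sum_congr rfl fun j _ => by ring
  rw [sA, sB]; ring
end

section
/- Under the setup of the two preceding statements (independent estimates with E[γ̂_j] = γ_j, Var(γ̂_j) = σ_{Xj}², E[Γ̂_j] = μ_α + β γ_j), the debiased denominator θ̂₂^{dE} = θ̂₂ − Δ satisfies E[θ̂₁ − β θ̂₂^{dE}] = 0. -/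
open Finset MeasureTheory ProbabilityTheory

theorem stmt4 {Ω : Type*} [MeasurableSpace Ω] (μ : Measure Ω) [IsProbabilityMeasure μ]
    (p : ℕ) (w γ σX : Fin p → ℝ) (β μα : ℝ) (hw : ∀ j, 0 < w j)
    (ghat Ghat : Fin p → Ω → ℝ)
    (hmeasg : ∀ j, Measurable (ghat j)) (hmeasG : ∀ j, Measurable (Ghat j))
    (hindep : iIndepFun
      (fun j => fun ω => (ghat j ω, Ghat j ω)) μ)
    (hindepPair : ∀ j, IndepFun (ghat j) (Ghat j) μ)
    (hL2g : ∀ j, MemLp (ghat j) 2 μ) (hL2G : ∀ j, MemLp (Ghat j) 2 μ)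
    (hmeang : ∀ j, ∫ ω, ghat j ω ∂μ = γ j)
    (hvarg : ∀ j, variance (ghat j) μ = σX j ^ 2)
    (hmeanG : ∀ j, ∫ ω, Ghat j ω ∂μ = μα + β * γ j) :
    ∫ ω, (((∑ j, w j) * (∑ j, w j * (ghat j ω * Ghat j ω))
            - (∑ j, w j * ghat j ω) * (∑ j, w j * Ghat j ω))
          - β * (((∑ j, w j) * (∑ j, w j * (ghat j ω) ^ 2)
                  - (∑ j, w j * ghat j ω) ^ 2)
                - ((∑ j, w j) * (∑ j, w j * σX j ^ 2)
                  - ∑ j, (w j) ^ 2 * σX j ^ 2))) ∂μ = 0 := by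
  -- basic integrability
  have hig : ∀ j, Integrable (ghat j) μ := fun j => (hL2g j).integrable one_le_two
  have hiG : ∀ j, Integrable (Ghat j) μ := fun j => (hL2G j).integrable one_le_two
  -- independence of components across different indices
  have hindPair : ∀ j k : Fin p, j ≠ k →
      IndepFun (fun ω => (ghat j ω, Ghat j ω)) (fun ω => (ghat k ω, Ghat k ω)) μ :=
    fun j k hjk => hindep.indepFun hjk
  have hind_gG : ∀ j k : Fin p, IndepFun (ghat j) (Ghat k) μ := by
    intro j k
    rcases eq_or_ne j k with rfl | hjk
    · exact hindepPair j
    · exact (hindPair j k hjk).comp measurable_fst measurable_snd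
  have hind_gg : ∀ j k : Fin p, j ≠ k → IndepFun (ghat j) (ghat k) μ :=
    fun j k hjk => (hindPair j k hjk).comp measurable_fst measurable_fst
  -- integrability of products
  have higG : ∀ j k : Fin p, Integrable (fun ω => ghat j ω * Ghat k ω) μ :=
    fun j k => (hind_gG j k).integrable_mul (hig j) (hiG k)
  have higg : ∀ j k : Fin p, Integrable (fun ω => ghat j ω * ghat k ω) μ := by
    intro j k
    rcases eq_or_ne j k with rfl | hjk
    · simpa [pow_two] using (hL2g j).integrable_sq
    · exact (hind_gg j k hjk).integrable_mul (hig j) (hig k)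
  -- product expectations
  have EgG : ∀ j k : Fin p, ∫ ω, ghat j ω * Ghat k ω ∂μ = γ j * (μα + β * γ k) := by
    intro j k
    rw [(hind_gG j k).integral_fun_mul_eq_mul_integral (hig j).aestronglyMeasurable (hiG k).aestronglyMeasurable,
      hmeang, hmeanG]
  have Egg : ∀ j k : Fin p, j ≠ k → ∫ ω, ghat j ω * ghat k ω ∂μ = γ j * γ k := by
    intro j k hjk
    rw [(hind_gg j k hjk).integral_fun_mul_eq_mul_integral (hig j).aestronglyMeasurable (hig k).aestronglyMeasurable,
      hmeang, hmeang]
  have Eg2 : ∀ j : Fin p, ∫ ω, (ghat j ω) ^ 2 ∂μ = σX j ^ 2 + γ j ^ 2 := by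
    intro j
    have h := variance_eq_sub (hL2g j)
    rw [hvarg j, hmeang j] at h
    have : (∫ ω, (ghat j ω) ^ 2 ∂μ) = ∫ ω, (ghat j ^ 2) ω ∂μ := by simp [pow_two]
    rw [this]
    linarith [h]
  have Eg2' : ∀ j k : Fin p, ∫ ω, ghat j ω * ghat k ω ∂μ
      = (if j = k then σX j ^ 2 else 0) + γ j * γ k := by
    intro j k
    rcases eq_or_ne j k with rfl | hjk
    · simp only [if_pos rfl]
      have h := Eg2 j
      calc ∫ ω, ghat j ω * ghat j ω ∂μ = ∫ ω, (ghat j ω) ^ 2 ∂μ := by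
            apply integral_congr_ae; filter_upwards with ω; ring
        _ = σX j ^ 2 + γ j * γ j := by rw [h]; ring
    · simp [if_neg hjk, Egg j k hjk]
  -- integrability of sums and the full integrand pieces
  have hi1 : Integrable (fun ω => ∑ j, w j * (ghat j ω * Ghat j ω)) μ :=
    integrable_finset_sum _ (fun j _ => ((higG j j).const_mul (w j)))
  have hi2 : Integrable (fun ω => (∑ j, w j * ghat j ω) * (∑ j, w j * Ghat j ω)) μ := by
    have : (fun ω => (∑ j, w j * ghat j ω) * (∑ j, w j * Ghat j ω))
        = fun ω => ∑ j, ∑ k, (w j * w k) * (ghat j ω * Ghat k ω) := by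
      funext ω
      rw [Finset.sum_mul_sum]
      apply Finset.sum_congr rfl; intro j _
      apply Finset.sum_congr rfl; intro k _
      ring
    rw [this]
    exact integrable_finset_sum _ (fun j _ =>
      integrable_finset_sum _ (fun k _ => (higG j k).const_mul _))
  have hi3 : Integrable (fun ω => ∑ j, w j * (ghat j ω) ^ 2) μ := by
    apply integrable_finset_sum _ (fun j _ => ?_)
    have : (fun ω => w j * (ghat j ω) ^ 2) = fun ω => w j * (ghat j ω * ghat j ω) := by
      funext ω; ring
    rw [this]
    exact (higg j j).const_mul _
  have hi4 : Integrable (fun ω => (∑ j, w j * ghat j ω) ^ 2) μ := by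
    have : (fun ω => (∑ j, w j * ghat j ω) ^ 2)
        = fun ω => ∑ j, ∑ k, (w j * w k) * (ghat j ω * ghat k ω) := by
      funext ω
      rw [pow_two, Finset.sum_mul_sum]
      apply Finset.sum_congr rfl; intro j _
      apply Finset.sum_congr rfl; intro k _
      ring
    rw [this]
    exact integrable_finset_sum _ (fun j _ =>
      integrable_finset_sum _ (fun k _ => (higg j k).const_mul _))
  -- compute each piece
  set S := ∑ j, w j with hS
  have I1 : ∫ ω, (∑ j, w j * (ghat j ω * Ghat j ω)) ∂μ
      = ∑ j, w j * (γ j * (μα + β * γ j)) := by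
    rw [integral_finset_sum _ (fun j _ => (higG j j).const_mul (w j))]
    exact Finset.sum_congr rfl fun j _ => by rw [integral_const_mul, EgG]
  have I2 : ∫ ω, (∑ j, w j * ghat j ω) * (∑ j, w j * Ghat j ω) ∂μ
      = (∑ j, w j * γ j) * (∑ k, w k * (μα + β * γ k)) := by
    have heq : (fun ω => (∑ j, w j * ghat j ω) * (∑ j, w j * Ghat j ω))
        = fun ω => ∑ j, ∑ k, (w j * w k) * (ghat j ω * Ghat k ω) := by
      funext ω
      rw [Finset.sum_mul_sum]
      apply Finset.sum_congr rfl; intro j _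
      apply Finset.sum_congr rfl; intro k _
      ring
    rw [heq, integral_finset_sum _ (fun j _ =>
      integrable_finset_sum _ (fun k _ => (higG j k).const_mul _))]
    rw [Finset.sum_mul_sum]
    apply Finset.sum_congr rfl; intro j _
    rw [integral_finset_sum _ (fun k _ => (higG j k).const_mul _)]
    apply Finset.sum_congr rfl; intro k _
    rw [integral_const_mul, EgG]
    ring
  have I3 : ∫ ω, (∑ j, w j * (ghat j ω) ^ 2) ∂μ
      = ∑ j, w j * (σX j ^ 2 + γ j ^ 2) := by
    have heq : (fun ω => ∑ j, w j * (ghat j ω) ^ 2)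
        = fun ω => ∑ j, w j * (ghat j ω * ghat j ω) := by
      funext ω; exact Finset.sum_congr rfl fun j _ => by ring
    rw [heq, integral_finset_sum _ (fun j _ => (higg j j).const_mul _)]
    apply Finset.sum_congr rfl; intro j _
    rw [integral_const_mul, Eg2' j j]
    simp [pow_two]
  have I4 : ∫ ω, (∑ j, w j * ghat j ω) ^ 2 ∂μ
      = (∑ j, w j ^ 2 * σX j ^ 2) + (∑ j, w j * γ j) ^ 2 := by
    have heq : (fun ω => (∑ j, w j * ghat j ω) ^ 2)
        = fun ω => ∑ j, ∑ k, (w j * w k) * (ghat j ω * ghat k ω) := by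
      funext ω
      rw [pow_two, Finset.sum_mul_sum]
      apply Finset.sum_congr rfl; intro j _
      apply Finset.sum_congr rfl; intro k _
      ring
    rw [heq, integral_finset_sum _ (fun j _ =>
      integrable_finset_sum _ (fun k _ => (higg j k).const_mul _))]
    have step : ∀ j : Fin p, (∫ ω, ∑ k, (w j * w k) * (ghat j ω * ghat k ω) ∂μ)
        = w j ^ 2 * σX j ^ 2 + (w j * γ j) * (∑ k, w k * γ k) := by
      intro j
      rw [integral_finset_sum _ (fun k _ => (higg j k).const_mul _)]
      have : ∀ k : Fin p, (∫ ω, (w j * w k) * (ghat j ω * ghat k ω) ∂μ)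
          = (w j * w k) * ((if j = k then σX j ^ 2 else 0) + γ j * γ k) := by
        intro k; rw [integral_const_mul, Eg2']
      rw [Finset.sum_congr rfl (fun k _ => this k)]
      simp only [mul_add, Finset.sum_add_distrib]
      congr 1
      · rw [Finset.sum_eq_single j]
        · rw [if_pos rfl]; ring
        · intro k _ hkj; simp [Ne.symm hkj]
        · intro h; exact absurd (Finset.mem_univ j) h
      · rw [Finset.mul_sum]
        apply Finset.sum_congr rfl; intro k _; ring
    rw [Finset.sum_congr rfl (fun j _ => step j), Finset.sum_add_distrib, pow_two,
      ← Finset.sum_mul]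
  -- put everything together
  have hA : Integrable (fun ω => S * (∑ j, w j * (ghat j ω * Ghat j ω))
      - (∑ j, w j * ghat j ω) * (∑ j, w j * Ghat j ω)) μ := (hi1.const_mul S).sub hi2
  have hB : Integrable (fun ω => S * (∑ j, w j * (ghat j ω) ^ 2)
      - (∑ j, w j * ghat j ω) ^ 2) μ := (hi3.const_mul S).sub hi4
  have hC : Integrable (fun ω => (S * (∑ j, w j * (ghat j ω) ^ 2)
      - (∑ j, w j * ghat j ω) ^ 2)
      - (S * (∑ j, w j * σX j ^ 2) - ∑ j, (w j) ^ 2 * σX j ^ 2)) μ :=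
    hB.sub (integrable_const _)
  have hD : Integrable (fun ω => β * ((S * (∑ j, w j * (ghat j ω) ^ 2)
      - (∑ j, w j * ghat j ω) ^ 2)
      - (S * (∑ j, w j * σX j ^ 2) - ∑ j, (w j) ^ 2 * σX j ^ 2))) μ := hC.const_mul β
  rw [integral_sub hA hD,
    integral_sub (hi1.const_mul S) hi2,
    integral_const_mul β,
    integral_sub hB (integrable_const _),
    integral_sub (hi3.const_mul S) hi4,
    integral_const_mul S, integral_const_mul S, I1, I2, I3, I4, integral_const]
  simp only [measure_univ, probReal_univ, ENNReal.toReal_one, smul_eq_mul, one_mul]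
  have e1 : (∑ k, w k * (μα + β * γ k)) = μα * S + β * ∑ k, w k * γ k := by
    rw [hS, Finset.mul_sum, Finset.mul_sum, ← Finset.sum_add_distrib]
    apply Finset.sum_congr rfl; intro k _; ring
  have e2 : (∑ j, w j * (γ j * (μα + β * γ j)))
      = μα * (∑ j, w j * γ j) + β * ∑ j, w j * γ j ^ 2 := by
    rw [Finset.mul_sum, Finset.mul_sum, ← Finset.sum_add_distrib]
    apply Finset.sum_congr rfl; intro j _; ring
  have e3 : (∑ j, w j * (σX j ^ 2 + γ j ^ 2))
      = (∑ j, w j * σX j ^ 2) + ∑ j, w j * γ j ^ 2 := by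
    rw [← Finset.sum_add_distrib]
    apply Finset.sum_congr rfl; intro j _; ring
  rw [e1, e2, e3]
  ring
end

section
/- Let Z ~ N(0, η²) with η > 0 be independent of W ~ N(μ, 1). Fix λ > 0 and condition on the selection event |W + Z| > λ. With A_± = −W/η ± λ/η, the Rao–Blackwell estimator W_RB = W − (1/η)·(φ(A_+) − φ(A_−))/(1 − Φ(A_+) + Φ(A_−)) satisfies E[W_RB ∣ |W + Z| > λ] = μ, where φ and Φ are the standard normal pdf and cdf. -/
open MeasureTheory ProbabilityTheory

/-- Standard normal density. -/
noncomputable def stdPhiPDF (x : ℝ) : ℝ :=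
  (Real.sqrt (2 * Real.pi))⁻¹ * Real.exp (-x ^ 2 / 2)

/-- Standard normal cumulative distribution function. -/
noncomputable def stdPhiCDF (x : ℝ) : ℝ := ∫ t in Set.Iic x, stdPhiPDF t

open Real Set Filter
open scoped NNReal ENNReal

lemma rb_phi_eq : stdPhiPDF = gaussianPDFReal 0 1 := by
  ext x
  simp [stdPhiPDF, gaussianPDFReal]

lemma rb_phi_pos (x : ℝ) : 0 < stdPhiPDF x := by
  rw [rb_phi_eq]; exact gaussianPDFReal_pos 0 1 x one_ne_zero

lemma rb_phi_cont : Continuous stdPhiPDF := by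
  unfold stdPhiPDF
  continuity

lemma rb_phi_integrable : Integrable stdPhiPDF := by
  rw [rb_phi_eq]; exact integrable_gaussianPDFReal 0 1

lemma rb_phi_le (x : ℝ) : stdPhiPDF x ≤ (Real.sqrt (2 * Real.pi))⁻¹ := by
  have h1 : Real.exp (-x ^ 2 / 2) ≤ 1 := by
    rw [Real.exp_le_one_iff]
    nlinarith [sq_nonneg x]
  have h2 : (0:ℝ) < (Real.sqrt (2 * Real.pi))⁻¹ := by positivity
  calc stdPhiPDF x ≤ (Real.sqrt (2 * Real.pi))⁻¹ * 1 := by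
        exact mul_le_mul_of_nonneg_left h1 h2.le
    _ = _ := mul_one _

lemma rb_integral_phi : ∫ x, stdPhiPDF x = 1 := by
  rw [rb_phi_eq]; exact integral_gaussianPDFReal_eq_one 0 one_ne_zero

lemma rb_Phi_nonneg (x : ℝ) : 0 ≤ stdPhiCDF x :=
  setIntegral_nonneg measurableSet_Iic (fun t _ => (rb_phi_pos t).le)

lemma rb_Phi_lt_one (x : ℝ) : stdPhiCDF x < 1 := by
  have hsplit : stdPhiCDF x + ∫ t in Set.Ioi x, stdPhiPDF t = 1 := by
    rw [stdPhiCDF, intervalIntegral.integral_Iic_add_Ioi rb_phi_integrable.integrableOn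
      rb_phi_integrable.integrableOn, rb_integral_phi]
  have hpos : 0 < ∫ t in Set.Ioi x, stdPhiPDF t := by
    have : 0 < ∫ t in Set.Ioc x (x+1), stdPhiPDF t := by
      refine (setIntegral_pos_iff_support_of_nonneg_ae ?_ ?_).2 ?_
      · exact Eventually.of_forall (fun t => (rb_phi_pos t).le)
      · exact rb_phi_integrable.integrableOn
      · have : Function.support stdPhiPDF = Set.univ := by
          ext t; simp [Function.mem_support, (rb_phi_pos t).ne']
        rw [this, Set.univ_inter]
        simp [Real.volume_Ioc]
    calc (0:ℝ) < ∫ t in Set.Ioc x (x+1), stdPhiPDF t := this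
      _ ≤ ∫ t in Set.Ioi x, stdPhiPDF t := by
          apply setIntegral_mono_set rb_phi_integrable.integrableOn
            (Eventually.of_forall fun t => (rb_phi_pos t).le)
          exact Eventually.of_forall (Set.Ioc_subset_Ioi_self)
  linarith

lemma rb_Phi_le_one (x : ℝ) : stdPhiCDF x ≤ 1 := (rb_Phi_lt_one x).le

lemma rb_hasDerivAt_Phi (x : ℝ) : HasDerivAt stdPhiCDF (stdPhiPDF x) x := by
  have key : ∀ y, stdPhiCDF y = stdPhiCDF 0 + ∫ t in (0:ℝ)..y, stdPhiPDF t := by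
    intro y
    rw [← intervalIntegral.integral_Iic_sub_Iic rb_phi_integrable.integrableOn rb_phi_integrable.integrableOn]
    simp [stdPhiCDF]
  have heq : stdPhiCDF = fun y => stdPhiCDF 0 + ∫ t in (0:ℝ)..y, stdPhiPDF t := funext key
  rw [heq]
  apply HasDerivAt.const_add
  exact (intervalIntegral.integral_hasStrictDerivAt_right
    rb_phi_integrable.intervalIntegrable
    rb_phi_integrable.aestronglyMeasurable.stronglyMeasurableAtFilter
    rb_phi_cont.continuousAt).hasDerivAt

lemma rb_Phi_cont : Continuous stdPhiCDF :=
  continuous_iff_continuousAt.2 fun x => (rb_hasDerivAt_Phi x).continuousAt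

/-- selection probability given W = w -/
noncomputable def rbP (η lam w : ℝ) : ℝ :=
  1 - stdPhiCDF (-w / η + lam / η) + stdPhiCDF (-w / η - lam / η)

lemma rbP_pos (η lam w : ℝ) : 0 < rbP η lam w := by
  have h1 := rb_Phi_lt_one (-w / η + lam / η)
  have h2 := rb_Phi_nonneg (-w / η - lam / η)
  unfold rbP; linarith

lemma rbP_le_two (η lam w : ℝ) : rbP η lam w ≤ 2 := by
  have h1 := rb_Phi_nonneg (-w / η + lam / η)
  have h2 := rb_Phi_le_one (-w / η - lam / η)
  unfold rbP; linarith

lemma rbP_cont (η lam : ℝ) : Continuous (rbP η lam) := by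
  unfold rbP
  exact ((continuous_const.sub (rb_Phi_cont.comp (by fun_prop))).add
    (rb_Phi_cont.comp (by fun_prop)))

lemma rb_hasDerivAt_P {η : ℝ} (hη : η ≠ 0) (lam w : ℝ) :
    HasDerivAt (rbP η lam)
      ((1/η) * (stdPhiPDF (-w / η + lam / η) - stdPhiPDF (-w / η - lam / η))) w := by
  have hinner : ∀ c : ℝ, HasDerivAt (fun w : ℝ => -w / η + c / η) (-1/η) w := by
    intro c
    simpa using ((hasDerivAt_id w).neg.div_const η).add_const (c / η)
  have hinner2 : HasDerivAt (fun w : ℝ => -w / η - lam / η) (-1/η) w := by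
    simpa [sub_eq_add_neg, neg_div] using hinner (-lam)
  have h1 : HasDerivAt (fun w : ℝ => stdPhiCDF (-w / η + lam / η))
      (stdPhiPDF (-w / η + lam / η) * (-1/η)) w :=
    (rb_hasDerivAt_Phi _).comp w (hinner lam)
  have h2 : HasDerivAt (fun w : ℝ => stdPhiCDF (-w / η - lam / η))
      (stdPhiPDF (-w / η - lam / η) * (-1/η)) w :=
    (rb_hasDerivAt_Phi _).comp w hinner2
  have := ((h1.const_sub 1).add h2)
  exact this.congr_deriv (by ring)

lemma rb_hasDerivAt_phi_shift (m w : ℝ) :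
    HasDerivAt (fun w => stdPhiPDF (w - m)) (-(w - m) * stdPhiPDF (w - m)) w := by
  have h1 : HasDerivAt (fun w : ℝ => -(w - m) ^ 2 / 2) (-(w - m)) w := by
    have : HasDerivAt (fun w : ℝ => (w - m) ^ 2) (2 * (w - m)) w := by
      exact (((hasDerivAt_id w).sub_const m).pow 2).congr_deriv (by simp)
    exact (this.neg.div_const 2).congr_deriv (by ring)
  have h2 : HasDerivAt (fun w : ℝ => Real.exp (-(w - m) ^ 2 / 2))
      (Real.exp (-(w - m) ^ 2 / 2) * (-(w - m))) w := (Real.hasDerivAt_exp _).comp w h1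
  have := h2.const_mul (Real.sqrt (2 * Real.pi))⁻¹
  exact this.congr_deriv (by unfold stdPhiPDF; ring)

/-- the product whose derivative we integrate -/
noncomputable def rbG (η lam m w : ℝ) : ℝ := rbP η lam w * stdPhiPDF (w - m)

noncomputable def rbG' (η lam m w : ℝ) : ℝ :=
  (1/η) * (stdPhiPDF (-w / η + lam / η) - stdPhiPDF (-w / η - lam / η)) * stdPhiPDF (w - m)
    + rbP η lam w * (-(w - m) * stdPhiPDF (w - m))

lemma rb_hasDerivAt_G {η : ℝ} (hη : η ≠ 0) (lam m w : ℝ) :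
    HasDerivAt (rbG η lam m) (rbG' η lam m w) w :=
  (rb_hasDerivAt_P hη lam w).mul (rb_hasDerivAt_phi_shift m w)

lemma rb_integrable_phi_shift (m : ℝ) : Integrable (fun w => stdPhiPDF (w - m)) :=
  rb_phi_integrable.comp_sub_right m

lemma rb_integrable_x_phi : Integrable (fun x : ℝ => x * stdPhiPDF x) := by
  have h := (integrable_mul_exp_neg_mul_sq (by norm_num : (0:ℝ) < 1/2)).const_mul
    (Real.sqrt (2 * Real.pi))⁻¹
  refine h.congr (Filter.Eventually.of_forall fun x => ?_)
  show (Real.sqrt (2 * Real.pi))⁻¹ * (x * Real.exp (-(1/2) * x ^ 2)) = x * stdPhiPDF x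
  rw [show -(1/2 : ℝ) * x ^ 2 = -x ^ 2 / 2 by ring]
  unfold stdPhiPDF
  ring

lemma rb_integrable_x_phi_shift (m : ℝ) : Integrable (fun w => (w - m) * stdPhiPDF (w - m)) :=
  rb_integrable_x_phi.comp_sub_right m

lemma rbG'_integrable {η : ℝ} (hη : 0 < η) (lam m : ℝ) : Integrable (rbG' η lam m) := by
  unfold rbG'
  apply Integrable.add
  · apply Integrable.bdd_mul (c := 1 / |η| * (Real.sqrt (2 * Real.pi))⁻¹) (rb_integrable_phi_shift m)
    · have hc : Continuous fun x : ℝ =>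
          1 / η * (stdPhiPDF (-x / η + lam / η) - stdPhiPDF (-x / η - lam / η)) :=
        continuous_const.mul
          ((rb_phi_cont.comp (by fun_prop : Continuous fun x : ℝ => -x / η + lam / η)).sub
            (rb_phi_cont.comp (by fun_prop : Continuous fun x : ℝ => -x / η - lam / η)))
      exact hc.aestronglyMeasurable
    · refine Eventually.of_forall fun x => ?_
      have b1 := rb_phi_le (-x / η + lam / η)
      have b2 := rb_phi_le (-x / η - lam / η)
      have p1 := (rb_phi_pos (-x / η + lam / η)).le
      have p2 := (rb_phi_pos (-x / η - lam / η)).le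
      rw [Real.norm_eq_abs, abs_mul, abs_div, abs_one] <;> try rfl
      have habs : |stdPhiPDF (-x / η + lam / η) - stdPhiPDF (-x / η - lam / η)|
          ≤ (Real.sqrt (2 * Real.pi))⁻¹ := by
        rw [abs_sub_le_iff]; constructor <;> linarith
      exact mul_le_mul_of_nonneg_left habs (by positivity)
  · have hneg : Integrable (fun w => -(w - m) * stdPhiPDF (w - m)) :=
      ((rb_integrable_x_phi_shift m).neg).congr
        (Filter.Eventually.of_forall fun w => by simp only [Pi.neg_apply]; ring)
    apply Integrable.bdd_mul (c := 2) hneg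
    · exact (rbP_cont η lam).aestronglyMeasurable
    · refine Eventually.of_forall fun x => ?_
      rw [Real.norm_eq_abs, abs_of_pos (rbP_pos η lam x)]
      exact rbP_le_two η lam x

lemma rb_tendsto_sq_atTop (m : ℝ) :
    Filter.Tendsto (fun w : ℝ => -(w - m) ^ 2 / 2) Filter.atTop Filter.atBot := by
  apply Filter.Tendsto.atBot_div_const (by norm_num : (0:ℝ) < 2)
  apply Filter.tendsto_neg_atBot_iff.2
  exact (Filter.tendsto_pow_atTop (two_ne_zero)).comp
    (Filter.tendsto_atTop_add_const_right _ (-m) Filter.tendsto_id)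

lemma rb_tendsto_sq_atBot (m : ℝ) :
    Filter.Tendsto (fun w : ℝ => -(w - m) ^ 2 / 2) Filter.atBot Filter.atBot := by
  apply Filter.Tendsto.atBot_div_const (by norm_num : (0:ℝ) < 2)
  apply Filter.tendsto_neg_atBot_iff.2
  have h : Filter.Tendsto (fun w : ℝ => (-(w - m)) ^ 2) Filter.atBot Filter.atTop :=
    (Filter.tendsto_pow_atTop (two_ne_zero)).comp
      (Filter.tendsto_neg_atBot_atTop.comp
        (Filter.tendsto_atBot_add_const_right _ (-m) Filter.tendsto_id))
  exact h.congr fun w => by rw [neg_sq]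

lemma rb_tendsto_phi_shift (m : ℝ) (l : Filter ℝ)
    (h : Filter.Tendsto (fun w : ℝ => -(w - m) ^ 2 / 2) l Filter.atBot) :
    Filter.Tendsto (fun w => stdPhiPDF (w - m)) l (nhds 0) := by
  have hexp : Filter.Tendsto (fun w => Real.exp (-(w - m) ^ 2 / 2)) l (nhds 0) :=
    Real.tendsto_exp_atBot.comp h
  have := hexp.const_mul (Real.sqrt (2 * Real.pi))⁻¹
  rw [mul_zero] at this
  refine this.congr fun w => ?_
  unfold stdPhiPDF
  ring

lemma rb_tendsto_G (η lam m : ℝ) (l : Filter ℝ)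
    (h : Filter.Tendsto (fun w : ℝ => -(w - m) ^ 2 / 2) l Filter.atBot) :
    Filter.Tendsto (rbG η lam m) l (nhds 0) := by
  apply squeeze_zero_norm (a := fun w => 2 * stdPhiPDF (w - m))
  · intro w
    rw [Real.norm_eq_abs, rbG, abs_mul, abs_of_pos (rbP_pos η lam w),
      abs_of_pos (rb_phi_pos (w - m))]
    exact mul_le_mul_of_nonneg_right (rbP_le_two η lam w) (rb_phi_pos (w - m)).le
  · have := (rb_tendsto_phi_shift m l h).const_mul (2:ℝ)
    simpa using this

lemma rb_integral_G'_eq_zero {η : ℝ} (hη : 0 < η) (lam m : ℝ) :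
    ∫ w, rbG' η lam m w = 0 := by
  have hint := rbG'_integrable hη lam m
  have hIic : ∫ w in Set.Iic (0:ℝ), rbG' η lam m w = rbG η lam m 0 - 0 :=
    integral_Iic_of_hasDerivAt_of_tendsto'
      (fun x _ => rb_hasDerivAt_G hη.ne' lam m x) hint.integrableOn
      (rb_tendsto_G η lam m _ (rb_tendsto_sq_atBot m))
  have hIoi : ∫ w in Set.Ioi (0:ℝ), rbG' η lam m w = 0 - rbG η lam m 0 :=
    integral_Ioi_of_hasDerivAt_of_tendsto'
      (fun x _ => rb_hasDerivAt_G hη.ne' lam m x) hint.integrableOn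
      (rb_tendsto_G η lam m _ (rb_tendsto_sq_atTop m))
  rw [← intervalIntegral.integral_Iic_add_Ioi hint.integrableOn hint.integrableOn, hIic, hIoi]
  ring

noncomputable def rbDiff (η lam w : ℝ) : ℝ :=
  stdPhiPDF (-w / η + lam / η) - stdPhiPDF (-w / η - lam / η)

lemma rb_integrable_diff_phi {η : ℝ} (hη : 0 < η) (lam m : ℝ) :
    Integrable (fun w => 1 / η * rbDiff η lam w * stdPhiPDF (w - m)) := by
  apply Integrable.bdd_mul (c := 1 / |η| * (Real.sqrt (2 * Real.pi))⁻¹) (rb_integrable_phi_shift m)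
  · have hc : Continuous fun x : ℝ => 1 / η * rbDiff η lam x :=
      continuous_const.mul
        ((rb_phi_cont.comp (by fun_prop : Continuous fun x : ℝ => -x / η + lam / η)).sub
          (rb_phi_cont.comp (by fun_prop : Continuous fun x : ℝ => -x / η - lam / η)))
    exact hc.aestronglyMeasurable
  · refine Eventually.of_forall fun x => ?_
    have b1 := rb_phi_le (-x / η + lam / η)
    have b2 := rb_phi_le (-x / η - lam / η)
    have p1 := (rb_phi_pos (-x / η + lam / η)).le
    have p2 := (rb_phi_pos (-x / η - lam / η)).le
    rw [Real.norm_eq_abs, abs_mul, abs_div, abs_one]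
    have habs : |rbDiff η lam x| ≤ (Real.sqrt (2 * Real.pi))⁻¹ := by
      rw [rbDiff, abs_sub_le_iff]; constructor <;> linarith
    exact mul_le_mul_of_nonneg_left habs (by positivity)

lemma rb_integrable_x_phi_shift' (m : ℝ) : Integrable (fun w => w * stdPhiPDF (w - m)) := by
  have := (rb_integrable_x_phi_shift m).add ((rb_integrable_phi_shift m).const_mul m)
  exact this.congr (Filter.Eventually.of_forall fun w => by simp only [Pi.add_apply]; ring)

lemma rb_integrable_K {η : ℝ} (hη : 0 < η) (lam m : ℝ) :
    Integrable (fun w => stdPhiPDF (w - m) * (w * rbP η lam w - 1 / η * rbDiff η lam w)) := by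
  have h2 : Integrable (fun w => rbP η lam w * (w * stdPhiPDF (w - m))) := by
    apply Integrable.bdd_mul (c := 2) (rb_integrable_x_phi_shift' m)
      (rbP_cont η lam).aestronglyMeasurable
    refine Eventually.of_forall fun x => ?_
    rw [Real.norm_eq_abs, abs_of_pos (rbP_pos η lam x)]
    exact rbP_le_two η lam x
  have := h2.sub (rb_integrable_diff_phi hη lam m)
  exact this.congr (Filter.Eventually.of_forall fun w => by simp only [Pi.sub_apply]; ring)

lemma rb_integrable_Pphi {η : ℝ} (hη : 0 < η) (lam m : ℝ) :
    Integrable (fun w => stdPhiPDF (w - m) * rbP η lam w) := by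
  have h2 : Integrable (fun w => rbP η lam w * stdPhiPDF (w - m)) := by
    apply Integrable.bdd_mul (c := 2) (rb_integrable_phi_shift m)
      (rbP_cont η lam).aestronglyMeasurable
    refine Eventually.of_forall fun x => ?_
    rw [Real.norm_eq_abs, abs_of_pos (rbP_pos η lam x)]
    exact rbP_le_two η lam x
  exact h2.congr (Filter.Eventually.of_forall fun w => by ring)

lemma rb_main_identity {η : ℝ} (hη : 0 < η) (lam m : ℝ) :
    ∫ w, stdPhiPDF (w - m) * (w * rbP η lam w - 1 / η * rbDiff η lam w)
      = m * ∫ w, stdPhiPDF (w - m) * rbP η lam w := by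
  have hK := rb_integrable_K hη lam m
  have hI3 := rb_integrable_Pphi hη lam m
  have key : ∫ w, (stdPhiPDF (w - m) * (w * rbP η lam w - 1 / η * rbDiff η lam w)
      - m * (stdPhiPDF (w - m) * rbP η lam w)) = 0 := by
    have heq : ∀ w, stdPhiPDF (w - m) * (w * rbP η lam w - 1 / η * rbDiff η lam w)
        - m * (stdPhiPDF (w - m) * rbP η lam w) = -(rbG' η lam m w) := by
      intro w
      simp only [rbG', rbDiff, rbP]
      ring
    rw [integral_congr_ae (Filter.Eventually.of_forall heq), integral_neg,
      rb_integral_G'_eq_zero hη lam m, neg_zero]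
  rw [integral_sub hK (hI3.const_mul m), integral_const_mul] at key
  linarith

lemma rb_gaussianPDF_one (m w : ℝ) : gaussianPDFReal m 1 w = stdPhiPDF (w - m) := by
  simp [gaussianPDFReal, stdPhiPDF]

lemma rb_integral_gaussianReal (m : ℝ) {v : ℝ≥0} (hv : v ≠ 0) (f : ℝ → ℝ) :
    ∫ x, f x ∂(gaussianReal m v) = ∫ x, gaussianPDFReal m v x * f x := by
  rw [gaussianReal_of_var_ne_zero _ hv]
  have hd : (gaussianPDF m v) = fun x => ((gaussianPDFReal m v x).toNNReal : ℝ≥0∞) := by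
    funext x; rfl
  rw [hd, integral_withDensity_eq_integral_smul
    ((measurable_gaussianPDFReal m v).real_toNNReal) f]
  congr 1
  funext x
  rw [NNReal.smul_def, Real.coe_toNNReal _ (gaussianPDFReal_nonneg m v x), smul_eq_mul]

lemma rb_G1_Iic (a : ℝ) : gaussianReal 0 1 (Set.Iic a) = ENNReal.ofReal (stdPhiCDF a) := by
  rw [gaussianReal_apply_eq_integral 0 one_ne_zero]
  congr 1
  rw [stdPhiCDF]
  refine setIntegral_congr_ae measurableSet_Iic ?_
  exact Filter.Eventually.of_forall fun t _ => by rw [rb_gaussianPDF_one, sub_zero]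

lemma rb_G1_Iio (a : ℝ) : gaussianReal 0 1 (Set.Iio a) = ENNReal.ofReal (stdPhiCDF a) := by
  rw [gaussianReal_apply_eq_integral 0 one_ne_zero, setIntegral_congr_set Iio_ae_eq_Iic]
  rw [← rb_G1_Iic, gaussianReal_apply_eq_integral 0 one_ne_zero]

lemma rb_G1_Ioi (a : ℝ) : gaussianReal 0 1 (Set.Ioi a) = ENNReal.ofReal (1 - stdPhiCDF a) := by
  rw [gaussianReal_apply_eq_integral 0 one_ne_zero]
  congr 1
  have h : ∫ t in Set.Ioi a, gaussianPDFReal 0 1 t = ∫ t in Set.Ioi a, stdPhiPDF t :=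
    setIntegral_congr_ae measurableSet_Ioi
      (Filter.Eventually.of_forall fun t _ => by rw [rb_gaussianPDF_one, sub_zero])
  have hsplit := intervalIntegral.integral_Iic_add_Ioi (b := a)
    rb_phi_integrable.integrableOn rb_phi_integrable.integrableOn
  rw [rb_integral_phi] at hsplit
  rw [h]
  have : stdPhiCDF a = ∫ t in Set.Iic a, stdPhiPDF t := rfl
  linarith

lemma rb_var_eq (η : ℝ) (hη : 0 < η) :
    (⟨η ^ 2, sq_nonneg η⟩ : ℝ≥0) * 1 = Real.toNNReal (η ^ 2) := by
  ext
  simp [Real.coe_toNNReal _ (sq_nonneg η)]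

lemma rb_slice {η lam : ℝ} (hη : 0 < η) (hlam : 0 < lam) (w : ℝ) :
    gaussianReal 0 (Real.toNNReal (η ^ 2)) {z | lam < |w + z|}
      = ENNReal.ofReal (rbP η lam w) := by
  have hmap : gaussianReal 0 (Real.toNNReal (η ^ 2)) = (gaussianReal 0 1).map (η * ·) := by
    rw [gaussianReal_map_const_mul, mul_zero]
    congr 1; ext; simp [Real.coe_toNNReal _ (sq_nonneg η)]
  have hSmeas : MeasurableSet {z : ℝ | lam < |w + z|} :=
    measurableSet_lt measurable_const
      ((continuous_abs.comp (continuous_const.add continuous_id)).measurable)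
  rw [hmap, Measure.map_apply (measurable_const_mul η) hSmeas]
  have hpre : (η * ·) ⁻¹' {z : ℝ | lam < |w + z|}
      = Set.Iio ((-lam - w) / η) ∪ Set.Ioi ((lam - w) / η) := by
    ext t
    simp only [Set.mem_preimage, Set.mem_setOf_eq, Set.mem_union, Set.mem_Iio, Set.mem_Ioi]
    rw [lt_div_iff₀ hη, div_lt_iff₀ hη, lt_abs]
    constructor
    · rintro (h | h)
      · right; nlinarith
      · left; nlinarith
    · rintro (h | h)
      · right; nlinarith
      · left; nlinarith
  rw [hpre, measure_union _ measurableSet_Ioi]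
  · rw [rb_G1_Iio, rb_G1_Ioi, ← ENNReal.ofReal_add (rb_Phi_nonneg _) (by linarith [rb_Phi_lt_one ((lam - w) / η)])]
    congr 1
    rw [rbP, show (-lam - w) / η = -w / η - lam / η by ring,
      show (lam - w) / η = -w / η + lam / η by ring]
    ring
  · apply Set.disjoint_left.2
    intro t ht ht'
    simp only [Set.mem_Iio] at ht
    simp only [Set.mem_Ioi] at ht'
    have h1 : (-lam - w) / η ≤ (lam - w) / η :=
      by gcongr; linarith
    linarith

lemma rb_integrable_id_gauss (m : ℝ) : Integrable (fun w : ℝ => w) (gaussianReal m 1) := by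
  rw [gaussianReal_of_var_ne_zero _ one_ne_zero,
    integrable_withDensity_iff (measurable_gaussianPDF m 1)
      (Filter.Eventually.of_forall fun x => ENNReal.ofReal_lt_top)]
  refine (rb_integrable_x_phi_shift' m).congr (Filter.Eventually.of_forall fun x => ?_)
  show x * stdPhiPDF (x - m) = x * (gaussianPDF m 1 x).toReal
  rw [show gaussianPDF m 1 x = ENNReal.ofReal (gaussianPDFReal m 1 x) from rfl,
    ENNReal.toReal_ofReal (gaussianPDFReal_nonneg m 1 x), rb_gaussianPDF_one]

lemma rb_integrable_P_gauss {η : ℝ} (hη : 0 < η) (lam m : ℝ) :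
    Integrable (rbP η lam) (gaussianReal m 1) := by
  refine Integrable.mono' (integrable_const 2) (rbP_cont η lam).aestronglyMeasurable
    (Filter.Eventually.of_forall fun x => ?_)
  rw [Real.norm_eq_abs, abs_of_pos (rbP_pos η lam x)]
  exact rbP_le_two η lam x

/-- the Rao-Blackwell estimator -/
noncomputable def rbEst (η lam w : ℝ) : ℝ := w - 1 / η * rbDiff η lam w / rbP η lam w

lemma rbEst_cont (η lam : ℝ) : Continuous (rbEst η lam) := by
  unfold rbEst rbDiff
  refine continuous_id.sub (Continuous.div ?_ (rbP_cont η lam) fun w => (rbP_pos η lam w).ne')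
  exact continuous_const.mul
    ((rb_phi_cont.comp (by fun_prop : Continuous fun x : ℝ => -x / η + lam / η)).sub
      (rb_phi_cont.comp (by fun_prop : Continuous fun x : ℝ => -x / η - lam / η)))

lemma rbEst_mul_P {η : ℝ} (hη : 0 < η) (lam w : ℝ) :
    rbEst η lam w * rbP η lam w = w * rbP η lam w - 1 / η * rbDiff η lam w := by
  have h := (rbP_pos η lam w).ne'
  rw [rbEst]
  field_simp

/-- numerator integral equals m times denominator integral -/
lemma rb_final_identity {η : ℝ} (hη : 0 < η) (lam m : ℝ) :
    ∫ w, rbEst η lam w * rbP η lam w ∂(gaussianReal m 1)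
      = m * ∫ w, rbP η lam w ∂(gaussianReal m 1) := by
  rw [rb_integral_gaussianReal m one_ne_zero, rb_integral_gaussianReal m one_ne_zero]
  have h1 : ∀ w : ℝ, gaussianPDFReal m 1 w * (rbEst η lam w * rbP η lam w)
      = stdPhiPDF (w - m) * (w * rbP η lam w - 1 / η * rbDiff η lam w) := fun w => by
    rw [rb_gaussianPDF_one, rbEst_mul_P hη]
  have h2 : ∀ w : ℝ, gaussianPDFReal m 1 w * rbP η lam w
      = stdPhiPDF (w - m) * rbP η lam w := fun w => by rw [rb_gaussianPDF_one]
  rw [integral_congr_ae (Filter.Eventually.of_forall h1),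
    integral_congr_ae (Filter.Eventually.of_forall h2)]
  exact rb_main_identity hη lam m

lemma rb_denom_pos {η : ℝ} (hη : 0 < η) (lam m : ℝ) :
    0 < ∫ w, rbP η lam w ∂(gaussianReal m 1) := by
  rw [rb_integral_gaussianReal m one_ne_zero]
  have hint : Integrable (fun w => gaussianPDFReal m 1 w * rbP η lam w) := by
    refine (rb_integrable_Pphi hη lam m).congr (Filter.Eventually.of_forall fun w => ?_)
    show stdPhiPDF (w - m) * rbP η lam w = gaussianPDFReal m 1 w * rbP η lam w
    rw [rb_gaussianPDF_one]
  refine (integral_pos_iff_support_of_nonneg_ae ?_ hint).2 ?_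
  · exact Filter.Eventually.of_forall fun w =>
      mul_nonneg (gaussianPDFReal_nonneg m 1 w) (rbP_pos η lam w).le
  · have : Function.support (fun w => gaussianPDFReal m 1 w * rbP η lam w) = Set.univ := by
      ext w
      simp only [Function.mem_support, Set.mem_univ, iff_true]
      exact (mul_pos (gaussianPDFReal_pos m 1 w one_ne_zero) (rbP_pos η lam w)).ne'
    rw [this]
    simp

lemma rb_diff_abs_le (η lam x : ℝ) : |rbDiff η lam x| ≤ (Real.sqrt (2 * Real.pi))⁻¹ := by
  have b1 := rb_phi_le (-x / η + lam / η)
  have b2 := rb_phi_le (-x / η - lam / η)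
  have p1 := (rb_phi_pos (-x / η + lam / η)).le
  have p2 := (rb_phi_pos (-x / η - lam / η)).le
  rw [rbDiff, abs_sub_le_iff]
  constructor <;> linarith

lemma rb_slice_meas (lam w : ℝ) : MeasurableSet {z : ℝ | lam < |w + z|} :=
  measurableSet_lt measurable_const
    ((continuous_abs.comp (continuous_const.add continuous_id)).measurable)

theorem stmt7 {Ω : Type*} [MeasurableSpace Ω] (μ : Measure Ω) [IsProbabilityMeasure μ]
    (W Z : Ω → ℝ) (m η lam : ℝ) (hη : 0 < η) (hlam : 0 < lam)
    (hWmeas : Measurable W) (hZmeas : Measurable Z)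
    (hW : μ.map W = gaussianReal m 1)
    (hZ : μ.map Z = gaussianReal 0 (Real.toNNReal (η ^ 2)))
    (hindep : IndepFun W Z μ) :
    ∫ ω, (W ω - (1 / η) *
        (stdPhiPDF (-(W ω) / η + lam / η) - stdPhiPDF (-(W ω) / η - lam / η)) /
        (1 - stdPhiCDF (-(W ω) / η + lam / η) + stdPhiCDF (-(W ω) / η - lam / η)))
      ∂(ProbabilityTheory.cond μ {ω | lam < |W ω + Z ω|}) = m := by
  set ν1 := gaussianReal m 1 with hν1
  set ν2 := gaussianReal 0 (Real.toNNReal (η ^ 2)) with hν2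
  have hpair : Measurable fun ω => (W ω, Z ω) := hWmeas.prodMk hZmeas
  have hjoint : μ.map (fun ω => (W ω, Z ω)) = ν1.prod ν2 := by
    rw [← hW, ← hZ]
    exact (indepFun_iff_map_prod_eq_prod_map_map hWmeas.aemeasurable hZmeas.aemeasurable).mp
      hindep
  set T : Set (ℝ × ℝ) := {p | lam < |p.1 + p.2|} with hTdef
  have hTmeas : MeasurableSet T :=
    measurableSet_lt measurable_const
      ((continuous_abs.comp (continuous_fst.add continuous_snd)).measurable)
  have hSpre : {ω | lam < |W ω + Z ω|} = (fun ω => (W ω, Z ω)) ⁻¹' T := rfl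
  have hSmeas : MeasurableSet {ω | lam < |W ω + Z ω|} := hSpre ▸ hpair hTmeas
  set D := ∫ w, rbP η lam w ∂ν1 with hDdef
  have hDpos : 0 < D := rb_denom_pos hη lam m
  have hμS : μ {ω | lam < |W ω + Z ω|} = ENNReal.ofReal D := by
    rw [hSpre, ← Measure.map_apply hpair hTmeas, hjoint, Measure.prod_apply hTmeas]
    have hslice : ∀ w, ν2 (Prod.mk w ⁻¹' T) = ENNReal.ofReal (rbP η lam w) := fun w =>
      rb_slice hη hlam w
    rw [lintegral_congr hslice,
      ← ofReal_integral_eq_lintegral_ofReal (rb_integrable_P_gauss hη lam m)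
        (Filter.Eventually.of_forall fun w => (rbP_pos η lam w).le)]
  -- numerator
  set F : ℝ × ℝ → ℝ := fun p => T.indicator (fun q => rbEst η lam q.1) p with hFdef
  have hFsm : AEStronglyMeasurable F (ν1.prod ν2) :=
    (((rbEst_cont η lam).comp continuous_fst).measurable.stronglyMeasurable.indicator
      hTmeas).aestronglyMeasurable
  have hFslice : ∀ w : ℝ, (fun z => F (w, z))
      = Set.indicator {z : ℝ | lam < |w + z|} (fun _ => rbEst η lam w) := by
    intro w
    funext z
    simp [hFdef, hTdef, Set.indicator_apply]
  have hFint : Integrable F (ν1.prod ν2) := by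
    rw [integrable_prod_iff hFsm]
    constructor
    · refine Filter.Eventually.of_forall fun w => ?_
      rw [hFslice w]
      exact (integrable_const _).indicator (rb_slice_meas lam w)
    · have hval : ∀ w : ℝ, (∫ z, ‖F (w, z)‖ ∂ν2) = |rbEst η lam w| * rbP η lam w := by
        intro w
        have hn : (fun z => ‖F (w, z)‖)
            = Set.indicator {z : ℝ | lam < |w + z|} (fun _ => ‖rbEst η lam w‖) := by
          funext z
          rw [show F (w, z) = Set.indicator {z : ℝ | lam < |w + z|}
            (fun _ => rbEst η lam w) z from congrFun (hFslice w) z]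
          simp only [Set.indicator_apply]
          split_ifs <;> simp
        rw [hn, integral_indicator_const _ (rb_slice_meas lam w), measureReal_def, rb_slice hη hlam w,
          ENNReal.toReal_ofReal (rbP_pos η lam w).le, smul_eq_mul, Real.norm_eq_abs]
        ring
      refine Integrable.mono'
        (((rb_integrable_id_gauss m).abs.const_mul 2).add
          (integrable_const (1 / η * (Real.sqrt (2 * Real.pi))⁻¹))) ?_
        (Filter.Eventually.of_forall fun w => ?_)
      · refine AEStronglyMeasurable.congr ?_
          (Filter.Eventually.of_forall fun w => (hval w).symm)
        exact (((rbEst_cont η lam).abs.mul (rbP_cont η lam))).aestronglyMeasurable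
      · rw [hval w, Real.norm_eq_abs,
          abs_of_nonneg (mul_nonneg (abs_nonneg _) (rbP_pos η lam w).le)]
        have h1 : |rbEst η lam w| * rbP η lam w = |rbEst η lam w * rbP η lam w| := by
          rw [abs_mul, abs_of_pos (rbP_pos η lam w)]
        rw [h1, rbEst_mul_P hη]
        calc |w * rbP η lam w - 1 / η * rbDiff η lam w|
            ≤ |w * rbP η lam w| + |1 / η * rbDiff η lam w| := abs_sub _ _
          _ ≤ 2 * |w| + 1 / η * (Real.sqrt (2 * Real.pi))⁻¹ := by
              have e1 : |w * rbP η lam w| ≤ 2 * |w| := by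
                rw [abs_mul, abs_of_pos (rbP_pos η lam w)]
                calc |w| * rbP η lam w ≤ |w| * 2 :=
                    mul_le_mul_of_nonneg_left (rbP_le_two η lam w) (abs_nonneg w)
                  _ = 2 * |w| := mul_comm _ _
              have e2 : |1 / η * rbDiff η lam w| ≤ 1 / η * (Real.sqrt (2 * Real.pi))⁻¹ := by
                rw [abs_mul, abs_of_pos (by positivity : (0:ℝ) < 1 / η)]
                exact mul_le_mul_of_nonneg_left (rb_diff_abs_le η lam w) (by positivity)
              linarith
  have hNum : ∫ ω in {ω | lam < |W ω + Z ω|}, rbEst η lam (W ω) ∂μ = m * D := by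
    have h1 : ∫ ω in {ω | lam < |W ω + Z ω|}, rbEst η lam (W ω) ∂μ
        = ∫ ω, F (W ω, Z ω) ∂μ := by
      rw [← integral_indicator hSmeas]
      refine integral_congr_ae (Filter.Eventually.of_forall fun ω => ?_)
      simp [hFdef, hTdef, Set.indicator_apply]
    have h2 : ∫ ω, F (W ω, Z ω) ∂μ = ∫ p, F p ∂(ν1.prod ν2) := by
      rw [← hjoint, integral_map hpair.aemeasurable (hjoint ▸ hFsm)]
    have h3 : ∫ p, F p ∂(ν1.prod ν2) = ∫ w, rbEst η lam w * rbP η lam w ∂ν1 := by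
      rw [integral_prod F hFint]
      refine integral_congr_ae (Filter.Eventually.of_forall fun w => ?_)
      show (∫ z, F (w, z) ∂ν2) = rbEst η lam w * rbP η lam w
      rw [show (fun z => F (w, z)) = Set.indicator {z : ℝ | lam < |w + z|}
          (fun _ => rbEst η lam w) from hFslice w,
        integral_indicator_const _ (rb_slice_meas lam w), measureReal_def, rb_slice hη hlam w,
        ENNReal.toReal_ofReal (rbP_pos η lam w).le, smul_eq_mul]
      ring
    rw [h1, h2, h3, rb_final_identity hη lam m]
  -- conclusion
  have hInt : (fun ω => W ω - 1 / η *
      (stdPhiPDF (-(W ω) / η + lam / η) - stdPhiPDF (-(W ω) / η - lam / η)) /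
      (1 - stdPhiCDF (-(W ω) / η + lam / η) + stdPhiCDF (-(W ω) / η - lam / η)))
      = fun ω => rbEst η lam (W ω) := rfl
  rw [hInt, ProbabilityTheory.cond, integral_smul_measure, hμS, ENNReal.toReal_inv,
    ENNReal.toReal_ofReal hDpos.le, smul_eq_mul]
  rw [show ∫ ω, rbEst η lam (W ω) ∂(μ.restrict {ω | lam < |W ω + Z ω|}) = m * D from hNum]
  field_simp
end

section
/- In the deterministic setting with Γ_j = μ_α + β γ_j + δ_j, w_j > 0, and the weighted InSIDE orthogonality (Σ w_j)(Σ w_j δ_j γ_j) − (Σ w_j δ_j)(Σ w_j γ_j) = 0, the Egger population slope equals β exactly: [(Σ w_j)(Σ w_j γ_j Γ_j) − (Σ w_j γ_j)(Σ w_j Γ_j)] / [(Σ w_j)(Σ w_j γ_j²) − (Σ w_j γ_j)²] = β, provided the denominator θ₂ is nonzero. -/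
/-! The Egger slope is the ratio of two weighted covariances, `cov_w(γ, Γ) / cov_w(γ, γ)`.
A weighted covariance is bilinear and vanishes against constants, so the intercept `μ_α`
drops out of `cov_w(γ, Γ)`, which becomes `β cov_w(γ, γ) + cov_w(γ, δ)`; the InSIDE
condition says exactly that the last term vanishes. -/

open Finset

section WeightedCov

variable {ι : Type*} [Fintype ι]

/-- Weighted covariance, scaled by the square of the total weight. -/
def weightedCov (w x y : ι → ℝ) : ℝ :=
  (∑ j, w j) * (∑ j, w j * x j * y j) - (∑ j, w j * x j) * (∑ j, w j * y j)

theorem weightedCov_comm (w x y : ι → ℝ) : weightedCov w x y = weightedCov w y x := by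
  unfold weightedCov
  simp only [mul_right_comm (w _) (x _)]
  ring

theorem weightedCov_affine_right (w x d : ι → ℝ) (a b : ℝ) :
    weightedCov w x (fun j => a + b * x j + d j) = b * weightedCov w x x + weightedCov w x d := by
  have hcross : ∑ j, w j * x j * (a + b * x j + d j)
      = a * ∑ j, w j * x j + b * ∑ j, w j * x j * x j + ∑ j, w j * x j * d j := by
    simp only [mul_sum, ← sum_add_distrib]
    exact sum_congr rfl fun j _ => by ring
  have hmean : ∑ j, w j * (a + b * x j + d j)
      = a * ∑ j, w j + b * ∑ j, w j * x j + ∑ j, w j * d j := by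
    simp only [mul_sum, ← sum_add_distrib]
    exact sum_congr rfl fun j _ => by ring
  unfold weightedCov
  rw [hcross, hmean]
  ring

end WeightedCov

theorem stmt16_general (p : ℕ) (w γ δ : Fin p → ℝ) (β μα : ℝ)
    (Γ : Fin p → ℝ) (hΓ : ∀ j, Γ j = μα + β * γ j + δ j)
    (hortho : (∑ j, w j) * (∑ j, w j * δ j * γ j)
        - (∑ j, w j * δ j) * (∑ j, w j * γ j) = 0)
    (hθ₂ : (∑ j, w j) * (∑ j, w j * γ j ^ 2) - (∑ j, w j * γ j) ^ 2 ≠ 0) :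
    ((∑ j, w j) * (∑ j, w j * γ j * Γ j) - (∑ j, w j * γ j) * (∑ j, w j * Γ j)) /
      ((∑ j, w j) * (∑ j, w j * γ j ^ 2) - (∑ j, w j * γ j) ^ 2) = β := by
  have hvar : (∑ j, w j) * (∑ j, w j * γ j ^ 2) - (∑ j, w j * γ j) ^ 2 = weightedCov w γ γ := by
    simp only [weightedCov, sq, mul_assoc]
  have hinside : weightedCov w γ δ = 0 := by rw [weightedCov_comm]; exact hortho
  have hΓ' : Γ = fun j => μα + β * γ j + δ j := funext hΓ
  rw [hvar] at hθ₂ ⊢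
  change weightedCov w γ Γ / _ = β
  rw [hΓ', weightedCov_affine_right, hinside, add_zero, mul_div_cancel_right₀ _ hθ₂]

theorem stmt16 (p : ℕ) (w γ δ : Fin p → ℝ) (β μα : ℝ) (hw : ∀ j, 0 < w j)
    (Γ : Fin p → ℝ) (hΓ : ∀ j, Γ j = μα + β * γ j + δ j)
    (hortho : (∑ j, w j) * (∑ j, w j * δ j * γ j)
        - (∑ j, w j * δ j) * (∑ j, w j * γ j) = 0)
    (hθ₂ : (∑ j, w j) * (∑ j, w j * γ j ^ 2) - (∑ j, w j * γ j) ^ 2 ≠ 0) :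
    ((∑ j, w j) * (∑ j, w j * γ j * Γ j) - (∑ j, w j * γ j) * (∑ j, w j * Γ j)) /
      ((∑ j, w j) * (∑ j, w j * γ j ^ 2) - (∑ j, w j * γ j) ^ 2) = β :=
  stmt16_general p w γ δ β μα Γ hΓ hortho hθ₂
end
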